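/- The Demazure–Lusztig type operators H_i·f = q^{−1}·f + (q·X_{i+1} − q^{−1}·X_i)·(f − f^{s_i})/(X_i − X_{i+1}) on k[X_1^{±1}, …, X_d^{±1}] satisfy the braid relation H_i H_{i+1} H_i = H_{i+1} H_i H_{i+1} for 1 ≤ i ≤ d−2. -/

import Mathlib

open LaurentPolynomial

noncomputable section

/-- The ground ring `k = ℤ[q,q⁻¹]`. -/
abbrev LP : Type := LaurentPolynomial ℤ

/-- The ring `k[X_1^{±1}, …, X_d^{±1}]` of Laurent polynomials in `d` variables over
`k = ℤ[q,q⁻¹]`, realized as the monoid algebra of `ℤ^d`. -/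
abbrev MvLaurent (d : ℕ) : Type := AddMonoidAlgebra LP (Fin d → ℤ)

/-- The variable `X_i`. -/
def Xvar {d : ℕ} (i : Fin d) : MvLaurent d :=
  AddMonoidAlgebra.single (Pi.single i (1 : ℤ)) (1 : LP)

/-- The additive automorphism of exponents induced by a permutation of the variables. -/
def permAddEquiv {d : ℕ} (π : Equiv.Perm (Fin d)) : (Fin d → ℤ) ≃+ (Fin d → ℤ) where
  toFun f := f ∘ π
  invFun f := f ∘ π.symm
  left_inv f := by funext x; simp
  right_inv f := by funext x; simp
  map_add' f g := rfl

/-- The algebra automorphism of `k[X_1^{±1},…,X_d^{±1}]` permuting the variables by `π`. -/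
def permAut {d : ℕ} (π : Equiv.Perm (Fin d)) : MvLaurent d ≃ₐ[LP] MvLaurent d :=
  AddMonoidAlgebra.domCongr LP LP (permAddEquiv π)

/-- The scalar `q^n` in `MvLaurent d`. -/
def qq {d : ℕ} (n : ℤ) : MvLaurent d := algebraMap LP (MvLaurent d) (T n)

/-- `H` is the Demazure–Lusztig operator for the pair of variables `(a, b)` (typically
`(i, i+1)`), i.e. it satisfies the defining equation
`(X_a − X_b)·(H f) = q⁻¹·(X_a − X_b)·f + (q·X_b − q⁻¹·X_a)·(f − f^{s})`,
which uniquely characterizes `H f = q⁻¹·f + (q·X_b − q⁻¹·X_a)·(f − f^s)/(X_a − X_b)`. -/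
def IsDL {d : ℕ} (a b : Fin d) (H : MvLaurent d → MvLaurent d) : Prop :=
  ∀ f : MvLaurent d,
    (Xvar a - Xvar b) * H f
      = qq (-1) * ((Xvar a - Xvar b) * f)
        + (qq 1 * Xvar b - qq (-1) * Xvar a) * (f - permAut (Equiv.swap a b) f)

end

noncomputable section DLBraidAux

instance (d : ℕ) : IsDomain (MvLaurent d) := NoZeroDivisors.to_isDomain _

variable {d : ℕ}

lemma permAut_single (π : Equiv.Perm (Fin d)) (v : Fin d → ℤ) (r : LP) :
    permAut π (AddMonoidAlgebra.single v r) = AddMonoidAlgebra.single (v ∘ π) r := by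
  simp [permAut, AddMonoidAlgebra.domCongr_single]; rfl

lemma permAut_swap_X (a b j : Fin d) :
    permAut (Equiv.swap a b) (Xvar j) = Xvar (Equiv.swap a b j) := by
  rw [Xvar, permAut_single]
  congr 1
  funext k
  simp only [Function.comp_apply, Pi.single_apply]
  congr 1
  rw [Equiv.apply_eq_iff_eq_symm_apply, Equiv.symm_swap, eq_comm (a := k)]

lemma permAut_comp (π ρ : Equiv.Perm (Fin d)) (g : MvLaurent d) :
    permAut π (permAut ρ g) = permAut (ρ * π) g := by
  induction g using AddMonoidAlgebra.induction with
  | zero => simp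
  | single_add v r f _ _ ih =>
    rw [map_add, map_add, map_add, ih]
    congr 1
    rw [permAut_single, permAut_single, permAut_single]
    rfl

lemma permAut_one (g : MvLaurent d) : permAut 1 g = g := by
  induction g using AddMonoidAlgebra.induction with
  | zero => simp
  | single_add v r f _ _ ih =>
    rw [map_add, ih]
    congr 1
    rw [permAut_single]
    rfl

lemma permAut_qq (π : Equiv.Perm (Fin d)) (n : ℤ) : permAut π (qq n : MvLaurent d) = qq n :=
  (permAut π).commutes (T n)

lemma Xvar_ne {a b : Fin d} (h : a ≠ b) : (Xvar a : MvLaurent d) ≠ Xvar b := by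
  intro hc
  have := AddMonoidAlgebra.single_inj.mp hc
  rcases this with ⟨h1, -⟩ | ⟨h1, -⟩
  · have := congrFun h1 a
    rw [Pi.single_eq_same, Pi.single_apply] at this
    split_ifs at this with hba
    · exact h hba
    · exact one_ne_zero this
  · exact one_ne_zero h1

end DLBraidAux

set_option maxHeartbeats 4000000 in
set_option synthInstance.maxHeartbeats 400000 in
/-- the Demazure–Lusztig operators
`H_i·f = q⁻¹·f + (q·X_{i+1} − q⁻¹·X_i)·(f − f^{s_i})/(X_i − X_{i+1})` on
`k[X_1^{±1},…,X_d^{±1}]` satisfy the braid relation `H_i H_{i+1} H_i = H_{i+1} H_i H_{i+1}`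
for `1 ≤ i ≤ d−2`. -/
theorem dl_braid (d i : ℕ) (hi : i + 2 < d)
    (H₁ H₂ : MvLaurent d → MvLaurent d)
    (hH₁ : IsDL ⟨i, by omega⟩ ⟨i + 1, by omega⟩ H₁)
    (hH₂ : IsDL ⟨i + 1, by omega⟩ ⟨i + 2, hi⟩ H₂)
    (f : MvLaurent d) :
    H₁ (H₂ (H₁ f)) = H₂ (H₁ (H₂ f)) := by
  set a : Fin d := ⟨i, by omega⟩ with ha_def
  set b : Fin d := ⟨i + 1, by omega⟩ with hb_def
  set c : Fin d := ⟨i + 2, hi⟩ with hc_def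
  have hab : a ≠ b := by
    rw [ha_def, hb_def]; intro h; exact absurd (congrArg Fin.val h) (by simp)
  have hbc : b ≠ c := by
    rw [hb_def, hc_def]; intro h; exact absurd (congrArg Fin.val h) (by simp)
  have hac : a ≠ c := by
    rw [ha_def, hc_def]; intro h; exact absurd (congrArg Fin.val h) (by simp)
  set σ₁ := Equiv.swap a b with hσ₁
  set σ₂ := Equiv.swap b c with hσ₂
  -- images of variables under the swaps
  have pX1a : permAut σ₁ (Xvar a) = Xvar b := by rw [hσ₁, permAut_swap_X, Equiv.swap_apply_left]
  have pX1b : permAut σ₁ (Xvar b) = Xvar a := by rw [hσ₁, permAut_swap_X, Equiv.swap_apply_right]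
  have pX1c : permAut σ₁ (Xvar c) = Xvar c := by
    rw [hσ₁, permAut_swap_X, Equiv.swap_apply_of_ne_of_ne hac.symm hbc.symm]
  have pX2a : permAut σ₂ (Xvar a) = Xvar a := by
    rw [hσ₂, permAut_swap_X, Equiv.swap_apply_of_ne_of_ne hab hac]
  have pX2b : permAut σ₂ (Xvar b) = Xvar c := by rw [hσ₂, permAut_swap_X, Equiv.swap_apply_left]
  have pX2c : permAut σ₂ (Xvar c) = Xvar b := by rw [hσ₂, permAut_swap_X, Equiv.swap_apply_right]
  have hq1 : ∀ n : ℤ, permAut σ₁ (qq n : MvLaurent d) = qq n := fun n => (permAut σ₁).commutes (T n)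
  have hq2 : ∀ n : ℤ, permAut σ₂ (qq n : MvLaurent d) = qq n := fun n => (permAut σ₂).commutes (T n)
  -- involutivity
  have invol₁ : ∀ g : MvLaurent d, permAut σ₁ (permAut σ₁ g) = g := fun g => by
    rw [permAut_comp, hσ₁, Equiv.swap_mul_self, permAut_one]
  have invol₂ : ∀ g : MvLaurent d, permAut σ₂ (permAut σ₂ g) = g := fun g => by
    rw [permAut_comp, hσ₂, Equiv.swap_mul_self, permAut_one]
  -- braid relation for the permutation actions
  have hbraid : permAut σ₁ (permAut σ₂ (permAut σ₁ f)) = permAut σ₂ (permAut σ₁ (permAut σ₂ f)) := by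
    rw [permAut_comp, permAut_comp, permAut_comp, permAut_comp]
    have hperm : σ₁ * σ₂ * σ₁ = σ₂ * σ₁ * σ₂ := by
      rw [hσ₁, hσ₂]
      rw [show Equiv.swap a b * Equiv.swap b c * Equiv.swap a b
          = Equiv.swap b a * Equiv.swap c b * Equiv.swap b a by
        rw [Equiv.swap_comm a b, Equiv.swap_comm b c],
        Equiv.swap_mul_swap_mul_swap hbc.symm hac.symm,
        Equiv.swap_mul_swap_mul_swap hab hac]
      exact Equiv.swap_comm a c
    rw [show σ₁ * (σ₂ * σ₁) = σ₁ * σ₂ * σ₁ by rw [mul_assoc],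
      show σ₂ * (σ₁ * σ₂) = σ₂ * σ₁ * σ₂ by rw [mul_assoc], hperm]
  -- the fourteen transported defining equations
  have e1 := hH₁ f
  have e3 := hH₂ (H₁ f)
  have eL := hH₁ (H₂ (H₁ f))
  have e1p := hH₂ f
  have e3p := hH₁ (H₂ f)
  have eR := hH₂ (H₁ (H₂ f))
  have e2 := congrArg (permAut σ₂) (hH₁ f)
  have e5 := congrArg (permAut σ₁) (hH₁ f)
  have e4 := congrArg (permAut σ₁) (hH₂ (H₁ f))
  have e6 := congrArg (fun t => permAut σ₁ (permAut σ₂ t)) (hH₁ f)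
  have e2p := congrArg (permAut σ₁) (hH₂ f)
  have e5p := congrArg (permAut σ₂) (hH₂ f)
  have e4p := congrArg (permAut σ₂) (hH₁ (H₂ f))
  have e6p := congrArg (fun t => permAut σ₂ (permAut σ₁ t)) (hH₂ f)
  simp only [← hσ₁, ← hσ₂] at e1 e3 eL e1p e3p eR
  simp only [← hσ₁, ← hσ₂, map_mul, map_sub, map_add, pX1a, pX1b, pX1c, pX2a, pX2b, pX2c,
    hq1, hq2] at e2 e5 e4 e6 e2p e5p e4p e6p
  rw [invol₁] at e5
  rw [invol₂] at e5p
  rw [← hbraid] at e6p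
  -- nonzero denominator to cancel
  have hXY : (Xvar a - Xvar b : MvLaurent d) ≠ 0 := sub_ne_zero.2 (Xvar_ne hab)
  have hYZ : (Xvar b - Xvar c : MvLaurent d) ≠ 0 := sub_ne_zero.2 (Xvar_ne hbc)
  have hXZ : (Xvar a - Xvar c : MvLaurent d) ≠ 0 := sub_ne_zero.2 (Xvar_ne hac)
  have hD : (((Xvar a - Xvar b) * ((Xvar b - Xvar c) * (Xvar a - Xvar c))) ^ 2 : MvLaurent d) ≠ 0 :=
    pow_ne_zero 2 (mul_ne_zero hXY (mul_ne_zero hYZ hXZ))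
  refine mul_left_cancel₀ hD ?_
  set X := (Xvar a : MvLaurent d) with hX
  set Y := (Xvar b : MvLaurent d) with hY
  set Z := (Xvar c : MvLaurent d) with hZ
  set Q := (qq 1 : MvLaurent d) with hQ
  set R := (qq (-1) : MvLaurent d) with hR
  linear_combination
      ((X - Y) * (Y - Z) ^ 2 * (X - Z) ^ 2) * eL
    + (-((X - Y) * (Y - Z) ^ 2 * (X - Z) * (Q * Y - R * X))) * e4
    + ((X - Y) * (Y - Z) * (X - Z) ^ 2 * (Q - R) * Y) * e3
    + ((Y - Z) ^ 2 * (X - Z) * (Q * Y - R * X) * (Q - R) * Z) * e5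
    + ((X - Y) * (Y - Z) * (X - Z) * (Q * Y - R * X) * (Q * Z - R * X)) * e6
    + ((Y - Z) * (X - Z) ^ 2 * (Q - R) ^ 2 * Y * Z) * e1
    + (-((X - Y) * (Y - Z) * (X - Z) * (Q - R) * Y * (Q * Z - R * Y))) * e2
    + (-((X - Y) ^ 2 * (Y - Z) * (X - Z) ^ 2)) * eR
    + ((X - Y) ^ 2 * (Y - Z) * (X - Z) * (Q * Z - R * Y)) * e4p
    + (-((X - Y) * (Y - Z) * (X - Z) ^ 2 * (Q - R) * Z)) * e3p
    + ((X - Y) ^ 2 * (X - Z) * (Q * Z - R * Y) * (R - Q) * Z) * e5p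
    + (-((X - Y) * (Y - Z) * (X - Z) * (Q * Z - R * Y) * (Q * Z - R * X))) * e6p
    + (-((X - Y) * (X - Z) ^ 2 * (Q - R) ^ 2 * Y * Z)) * e1p
    + ((X - Y) * (Y - Z) * (X - Z) * (Q - R) * Z * (Q * Y - R * X)) * e2p
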